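/- arXiv:1001.1540 — 3 statements merged into one kernel-verified Lean document; each statement's English description precedes it below -/
import Mathlib

section
/- Let μ be a probability measure on ℝ with all moments finite and Jacobi parameters (β_n, γ_n). Then for every m ≥ 0, the m-th moment of μ equals the sum over all noncrossing partitions σ of {1,...,m} with all blocks of size at most 2, of the product over singleton blocks V of β_{d(V,σ)} times the product over pair blocks V of γ_{d(V,σ)}, where d(V,σ) denotes the depth of block V in σ (the number of blocks strictly nesting V). -/
open scoped Classical
open MeasureTheory Finset

noncomputable section

/-- `V` is nested inside `U`: some interval with endpoints in `U` contains all of `V`. -/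
def Nests {m : ℕ} (U V : Finset (Fin m)) : Prop :=
  ∃ r ∈ U, ∃ s ∈ U, ∀ k ∈ V, r ≤ k ∧ k ≤ s

/-- A finpartition of `{1,...,m}` is noncrossing. -/
def IsNoncrossing {m : ℕ} (π : Finpartition (Finset.univ : Finset (Fin m))) : Prop :=
  ∀ V₁ ∈ π.parts, ∀ V₂ ∈ π.parts, ∀ x₁ x₂ x₃ x₄ : Fin m,
    x₁ < x₂ → x₂ < x₃ → x₃ < x₄ →
    x₁ ∈ V₁ → x₃ ∈ V₁ → x₂ ∈ V₂ → x₄ ∈ V₂ → V₁ = V₂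

/-- The depth of a block: the number of other blocks nesting it. -/
def depth {m : ℕ} (π : Finpartition (Finset.univ : Finset (Fin m)))
    (V : Finset (Fin m)) : ℕ :=
  (π.parts.filter (fun U => U ≠ V ∧ Nests U V)).card

/-- Noncrossing partitions of `{1,...,m}`. -/
def NCset (m : ℕ) : Finset (Finpartition (Finset.univ : Finset (Fin m))) :=
  Finset.univ.filter IsNoncrossing

/-- Noncrossing partitions with all blocks of size at most 2. -/
def NC12 (m : ℕ) : Finset (Finpartition (Finset.univ : Finset (Fin m))) :=
  Finset.univ.filter (fun π => IsNoncrossing π ∧ ∀ V ∈ π.parts, V.card ≤ 2)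

/-- Interval partitions of `{1,...,m}`. -/
def IntPart (m : ℕ) : Finset (Finpartition (Finset.univ : Finset (Fin m))) :=
  Finset.univ.filter
    (fun π => ∀ V ∈ π.parts, ∀ x ∈ V, ∀ y ∈ V, ∀ z : Fin m, x ≤ z → z ≤ y → z ∈ V)

/-- The `m`-th moment of a measure on `ℝ`. -/
def mom (μ : Measure ℝ) (m : ℕ) : ℝ := ∫ x, x ^ m ∂μ

/-- `μ` has all moments finite. -/
def FiniteMoments (μ : Measure ℝ) : Prop :=
  ∀ m : ℕ, Integrable (fun x => x ^ m) μ

/-- `(β, γ)` are Jacobi parameters for `μ`: there are monic orthogonal polynomials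
satisfying the three-term recurrence. -/
def HasJacobi (μ : Measure ℝ) (β γ : ℕ → ℝ) : Prop :=
  ∃ P : ℕ → Polynomial ℝ,
    (∀ n, (P n).Monic) ∧ (∀ n, (P n).natDegree = n) ∧
    (∀ i j, i ≠ j → ∫ x, (P i).eval x * (P j).eval x ∂μ = 0) ∧
    (Polynomial.X * P 0 = P 1 + Polynomial.C (β 0) * P 0) ∧
    (∀ n, Polynomial.X * P (n + 1) =
      P (n + 2) + Polynomial.C (β (n + 1)) * P (n + 1) + Polynomial.C (γ n) * P n)

/-- `r` is the sequence of free cumulants of `μ` (moment-cumulant formula over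
noncrossing partitions). -/
def FreeCumulants (μ : Measure ℝ) (r : ℕ → ℝ) : Prop :=
  ∀ m : ℕ, 1 ≤ m → mom μ m = ∑ π ∈ NCset m, ∏ V ∈ π.parts, r V.card

/-- `η` is the sequence of Boolean cumulants of `μ`. -/
def BooleanCumulants (μ : Measure ℝ) (η : ℕ → ℝ) : Prop :=
  ∀ m : ℕ, 1 ≤ m → mom μ m = ∑ π ∈ IntPart m, ∏ V ∈ π.parts, η V.card

/-- `R` is the sequence of two-state free cumulants of the pair `(μ̃, μ)`,
where `r` are the free cumulants of `μ`. -/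
def TwoStateCumulants (μt μ : Measure ℝ) (R r : ℕ → ℝ) : Prop :=
  FreeCumulants μ r ∧
  ∀ m : ℕ, 1 ≤ m → mom μt m =
    ∑ π ∈ NCset m,
      (∏ V ∈ π.parts.filter (fun V => depth π V = 0), R V.card) *
      (∏ V ∈ π.parts.filter (fun V => depth π V ≠ 0), r V.card)


/-!
Expanding `X ^ m * P k` with the three-term recurrence and integrating, using
`∫ P k dμ = if k = 0 then 1 else 0`, shows that `∫ x ^ m P_k(x) dμ` is the weighted number of
Motzkin paths of length `m` from height `0` to height `k`, where an up-step from height `h`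
weighs `γ h`, a flat step at height `h` weighs `β h` and a down-step weighs `1`; the `m`-th
moment is the case `k = 0`.

Motzkin paths returning to `0` correspond bijectively to noncrossing partitions into singletons
and pairs: a singleton becomes a flat step, a pair `{a < b}` an up-step at `a` and a down-step
at `b`. The height before position `i` counts the blocks straddling `i`, which at the first
element of a block is its depth, so the weights agree. Conversely, a down-step is paired with
the last earlier up-step leaving the height that the down-step returns to.
-/

section Noncrossing

variable {m : ℕ} {σ : Finpartition (univ : Finset (Fin m))} {U V : Finset (Fin m)}
  {a b x y : Fin m}

lemma IsNoncrossing.between (hnc : IsNoncrossing σ) (hU : U ∈ σ.parts) (hV : V ∈ σ.parts)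
    (hUV : U ≠ V) (hx : x ∈ U) (hy : y ∈ U) (ha : a ∈ V) (hxa : x < a) (hay : a < y)
    (hb : b ∈ V) : x < b ∧ b < y := by
  constructor
  · rcases lt_trichotomy x b with h | rfl | h
    · exact h
    · exact absurd (σ.eq_of_mem_parts hU hV hx hb) hUV
    · exact absurd (hnc V hV U hU b x a y h hxa hay hb ha hx hy) hUV.symm
  · rcases lt_trichotomy b y with h | rfl | h
    · exact h
    · exact absurd (σ.eq_of_mem_parts hU hV hy hb) hUV
    · exact absurd (hnc U hU V hV x a y b hxa hay h hx hy ha hb) hUV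

end Noncrossing

namespace AccardiBozejko

inductive Step | up | flat | down
  deriving DecidableEq

namespace Step

instance : Fintype Step := ⟨{up, flat, down}, fun s => by cases s <;> simp⟩

def next : Step → ℕ → ℕ
  | up, h => h + 1
  | flat, h => h
  | down, h => h - 1

def weight (β γ : ℕ → ℝ) : Step → ℕ → ℝ
  | up, h => γ h
  | flat, h => β h
  | down, _ => 1

end Step

open Step

def height (g : ℕ → Step) : ℕ → ℕ
  | 0 => 0
  | i + 1 => (g i).next (height g i)

@[simp] lemma height_zero (g : ℕ → Step) : height g 0 = 0 := rfl

def NeverBelowZero (g : ℕ → Step) (m : ℕ) : Prop :=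
  ∀ i < m, g i = down → 0 < height g i

def pathWeight (β γ : ℕ → ℝ) (g : ℕ → Step) (m : ℕ) : ℝ :=
  ∏ i ∈ range m, (g i).weight β γ (height g i)

/-- Paths of length `m` are stored as `Fin m → Step`; padding them with flat steps makes
heights and weights available at every index. -/
def extend {m : ℕ} (f : Fin m → Step) : ℕ → Step :=
  fun i => if h : i < m then f ⟨i, h⟩ else flat

def motzkinSum (β γ : ℕ → ℝ) (m k : ℕ) : ℝ :=
  ∑ f : Fin m → Step,
    if NeverBelowZero (extend f) m ∧ height (extend f) m = k then pathWeight β γ (extend f) m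
    else 0

lemma height_congr {g g' : ℕ → Step} {n : ℕ} (h : ∀ i < n, g i = g' i) :
    height g n = height g' n := by
  induction n with
  | zero => rfl
  | succ n ih => simp only [height, h n n.lt_succ_self, ih fun i hi => h i (by omega)]

lemma extend_apply {m : ℕ} (f : Fin m → Step) (i : Fin m) : extend f i = f i := by
  simp [extend]

section Recurrence

variable {m : ℕ} (f : Fin m → Step) (s : Step)

lemma extend_snoc_of_lt {i : ℕ} (hi : i < m) :
    extend (Fin.snoc f s : Fin (m + 1) → Step) i = extend f i := by
  simp only [extend, hi, Nat.lt_succ_of_lt hi, dite_true]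
  exact Fin.snoc_castSucc (α := fun _ => Step) s f ⟨i, hi⟩

lemma extend_snoc_self : extend (Fin.snoc f s : Fin (m + 1) → Step) m = s := by
  simp only [extend, Nat.lt_succ_self, dite_true]
  exact Fin.snoc_last (α := fun _ => Step) s f

lemma height_snoc {i : ℕ} (hi : i ≤ m) :
    height (extend (Fin.snoc f s : Fin (m + 1) → Step)) i = height (extend f) i :=
  height_congr fun j hj => extend_snoc_of_lt f s (by omega)

lemma neverBelowZero_snoc :
    NeverBelowZero (extend (Fin.snoc f s : Fin (m + 1) → Step)) (m + 1) ↔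
      NeverBelowZero (extend f) m ∧ (s = down → 0 < height (extend f) m) := by
  simp only [NeverBelowZero, Nat.forall_lt_succ_right, extend_snoc_self,
    height_snoc f s le_rfl]
  refine and_congr (forall₂_congr fun i hi => ?_) Iff.rfl
  rw [extend_snoc_of_lt f s hi, height_snoc f s hi.le]

lemma pathWeight_snoc (β γ : ℕ → ℝ) :
    pathWeight β γ (extend (Fin.snoc f s : Fin (m + 1) → Step)) (m + 1) =
      pathWeight β γ (extend f) m * s.weight β γ (height (extend f) m) := by
  rw [pathWeight, prod_range_succ, extend_snoc_self, height_snoc f s le_rfl, pathWeight]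
  congr 1
  refine prod_congr rfl fun i hi => ?_
  rw [extend_snoc_of_lt f s (mem_range.1 hi), height_snoc f s (mem_range.1 hi).le]

lemma sum_step {M : Type*} [AddCommMonoid M] (G : Step → M) :
    ∑ s, G s = G up + G flat + G down := by
  rw [show (univ : Finset Step) = {up, flat, down} from rfl, sum_insert (by decide),
    sum_pair (by decide), add_assoc]

variable (β γ : ℕ → ℝ)

lemma motzkinSum_succ (k : ℕ) :
    motzkinSum β γ (m + 1) k = ∑ s, ∑ f : Fin m → Step,
      if NeverBelowZero (extend f) m ∧ (s = down → 0 < height (extend f) m) ∧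
          s.next (height (extend f) m) = k then
        pathWeight β γ (extend f) m * s.weight β γ (height (extend f) m)
      else 0 := by
  rw [motzkinSum, ← (Fin.snocEquiv fun _ => Step).sum_comp, Fintype.sum_prod_type]
  refine sum_congr rfl fun s _ => sum_congr rfl fun f _ => ?_
  simp only [Fin.snocEquiv, Equiv.coe_fn_mk, neverBelowZero_snoc, pathWeight_snoc, height,
    height_snoc f s le_rfl, extend_snoc_self, and_assoc]

lemma sum_eq_mul_motzkinSum (c : ℝ) (j : ℕ) {F : (Fin m → Step) → ℝ}
    (hF : ∀ f, F f = if NeverBelowZero (extend f) m ∧ height (extend f) m = j then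
      c * pathWeight β γ (extend f) m else 0) :
    ∑ f, F f = c * motzkinSum β γ m j := by
  simp only [hF, motzkinSum, mul_sum, mul_ite, mul_zero]

lemma motzkinSum_succ_zero :
    motzkinSum β γ (m + 1) 0 = motzkinSum β γ m 1 + β 0 * motzkinSum β γ m 0 := by
  rw [motzkinSum_succ, sum_step, sum_eq_mul_motzkinSum β γ 0 0, sum_eq_mul_motzkinSum β γ (β 0) 0,
    sum_eq_mul_motzkinSum β γ 1 1]
  · ring
  all_goals
    intro f
    generalize height (extend f) m = h
    split_ifs <;> simp_all [next, weight, mul_comm] <;> omega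

lemma motzkinSum_succ_succ (k : ℕ) :
    motzkinSum β γ (m + 1) (k + 1) = motzkinSum β γ m (k + 2) +
      β (k + 1) * motzkinSum β γ m (k + 1) + γ k * motzkinSum β γ m k := by
  rw [motzkinSum_succ, sum_step, sum_eq_mul_motzkinSum β γ (γ k) k,
    sum_eq_mul_motzkinSum β γ (β (k + 1)) (k + 1), sum_eq_mul_motzkinSum β γ 1 (k + 2)]
  · ring
  all_goals
    intro f
    generalize height (extend f) m = h
    split_ifs <;> simp_all [next, weight, mul_comm]

lemma motzkinSum_zero (k : ℕ) : motzkinSum β γ 0 k = if k = 0 then 1 else 0 := by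
  simp [motzkinSum, NeverBelowZero, height, pathWeight, eq_comm]

end Recurrence

section Moments

open Polynomial

variable {μ : Measure ℝ} (β γ : ℕ → ℝ)

lemma integrable_eval (hfin : FiniteMoments μ) (p : ℝ[X]) : Integrable (fun x => p.eval x) μ := by
  simp_rw [eval_eq_sum_range]
  exact integrable_finsetSum _ fun i _ => (hfin i).const_mul _

lemma integral_eval_add (hfin : FiniteMoments μ) (p q : ℝ[X]) :
    ∫ x, (p + q).eval x ∂μ = ∫ x, p.eval x ∂μ + ∫ x, q.eval x ∂μ := by
  simp only [eval_add]
  exact integral_add (integrable_eval hfin p) (integrable_eval hfin q)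

lemma integral_eval_C_mul (c : ℝ) (p : ℝ[X]) :
    ∫ x, (C c * p).eval x ∂μ = c * ∫ x, p.eval x ∂μ := by
  simp only [eval_mul, eval_C]
  exact integral_const_mul c _

theorem integral_X_pow_mul_eq_motzkinSum [IsProbabilityMeasure μ] (hfin : FiniteMoments μ)
    {P : ℕ → ℝ[X]} (hP0 : P 0 = 1)
    (horth : ∀ i j, i ≠ j → ∫ x, (P i).eval x * (P j).eval x ∂μ = 0)
    (hrec0 : X * P 0 = P 1 + C (β 0) * P 0)
    (hrec : ∀ n, X * P (n + 1) = P (n + 2) + C (β (n + 1)) * P (n + 1) + C (γ n) * P n)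
    (m k : ℕ) : ∫ x, (X ^ m * P k).eval x ∂μ = motzkinSum β γ m k := by
  induction m generalizing k with
  | zero =>
    rcases k with _ | k
    · simp [hP0, motzkinSum_zero]
    · simpa [hP0, motzkinSum_zero] using horth 0 (k + 1) k.succ_ne_zero.symm
  | succ m ih =>
    rcases k with _ | k
    · have h : X ^ (m + 1) * P 0 = X ^ m * P 1 + C (β 0) * (X ^ m * P 0) := by
        rw [pow_succ, mul_assoc, hrec0]; ring
      rw [h, integral_eval_add hfin, integral_eval_C_mul, ih, ih, motzkinSum_succ_zero]
    · have h : X ^ (m + 1) * P (k + 1) = X ^ m * P (k + 2) +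
          C (β (k + 1)) * (X ^ m * P (k + 1)) + C (γ k) * (X ^ m * P k) := by
        rw [pow_succ, mul_assoc, hrec]; ring
      rw [h, integral_eval_add hfin, integral_eval_add hfin, integral_eval_C_mul,
        integral_eval_C_mul, ih, ih, ih, motzkinSum_succ_succ]

theorem mom_eq_motzkinSum [IsProbabilityMeasure μ] (hfin : FiniteMoments μ)
    (hJ : HasJacobi μ β γ) (m : ℕ) : mom μ m = motzkinSum β γ m 0 := by
  obtain ⟨P, hmon, hdeg, horth, hrec0, hrec⟩ := hJ
  have hP0 : P 0 = 1 := (hmon 0).natDegree_eq_zero.mp (hdeg 0)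
  rw [← integral_X_pow_mul_eq_motzkinSum β γ hfin hP0 horth hrec0 hrec, mom]
  simp [hP0]

end Moments

section Matching

variable {g : ℕ → Step} {m : ℕ}

lemma height_succ_le (g : ℕ → Step) (i : ℕ) : height g (i + 1) ≤ height g i + 1 := by
  cases h : g i <;> simp only [height, h, next] <;> omega

lemma eq_up_of_height_lt {i : ℕ} (h : height g i < height g (i + 1)) : g i = up := by
  cases hi : g i <;> simp only [height, hi, next] at h ⊢ <;> omega

lemma height_succ_of_down {i : ℕ} (h : g i = down) : height g (i + 1) = height g i - 1 := by
  rw [height, h, next]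

lemma exists_up_of_height_lt {a b v : ℕ} (hab : a ≤ b) (ha : height g a ≤ v)
    (hb : v < height g b) : ∃ u, a ≤ u ∧ u < b ∧ g u = up ∧ height g u = v := by
  induction b with
  | zero =>
    obtain rfl := Nat.le_zero.1 hab
    omega
  | succ b ih =>
    have hab' : a ≤ b := by rcases hab.lt_or_eq with h | rfl <;> omega
    by_cases hv : v < height g b
    · obtain ⟨u, hau, hub, hu⟩ := ih hab' hv
      exact ⟨u, hau, by omega, hu⟩
    · have := height_succ_le g b
      exact ⟨b, hab', by omega, eq_up_of_height_lt (by omega), by omega⟩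

def mate (g : ℕ → Step) (i : ℕ) : ℕ :=
  Nat.findGreatest (fun j => g j = up ∧ height g j = height g (i + 1)) i

lemma mate_le (g : ℕ → Step) (i : ℕ) : mate g i ≤ i := Nat.findGreatest_le i

lemma mate_spec (hg : NeverBelowZero g m) {i : ℕ} (hi : i < m) (hdown : g i = down) :
    mate g i < i ∧ g (mate g i) = up ∧ height g (mate g i) = height g (i + 1) := by
  have hpos := hg i hi hdown
  have hsucc := height_succ_of_down hdown
  obtain ⟨u, -, hui, hu⟩ := exists_up_of_height_lt (g := g) (v := height g (i + 1))
    (Nat.zero_le i) (by rw [height_zero]; omega) (by omega)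
  have hspec : g (mate g i) = up ∧ height g (mate g i) = height g (i + 1) :=
    Nat.findGreatest_spec (P := fun j => g j = up ∧ height g j = height g (i + 1)) hui.le hu
  refine ⟨lt_of_le_of_ne (mate_le g i) fun h => ?_, hspec⟩
  rw [h, hdown] at hspec
  exact absurd hspec.1 (by decide)

lemma height_mate_lt (hg : NeverBelowZero g m) {i : ℕ} (hi : i < m) (hdown : g i = down)
    {t : ℕ} (ht : mate g i < t) (hti : t ≤ i) : height g (mate g i) < height g t := by
  obtain ⟨-, -, hmate⟩ := mate_spec hg hi hdown
  have := hg i hi hdown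
  have := height_succ_of_down hdown
  by_contra! hle
  obtain ⟨u, htu, hui, hu⟩ := exists_up_of_height_lt (g := g) hti hle (by omega)
  exact Nat.findGreatest_is_greatest (lt_of_lt_of_le ht htu) hui.le ⟨hu.1, by omega⟩

lemma mate_injective (hg : NeverBelowZero g m) {i i' : ℕ} (hi : i < m) (hdown : g i = down)
    (hi' : i' < m) (hdown' : g i' = down) (h : mate g i = mate g i') : i = i' := by
  wlog hlt : i < i' generalizing i i'
  · rcases (not_lt.1 hlt).lt_or_eq with hlt | rfl
    · exact (this hi' hdown' hi hdown h.symm hlt).symm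
    · rfl
  obtain ⟨hmi, -, hmate⟩ := mate_spec hg hi hdown
  rw [h] at hmi hmate
  have := height_mate_lt hg hi' hdown' (t := i + 1) (by omega) hlt
  omega

lemma exists_mate (hg : NeverBelowZero g m) (hgm : height g m = 0) {j : ℕ} (hj : j < m)
    (hup : g j = up) : ∃ i, j < i ∧ i < m ∧ g i = down ∧ mate g i = j := by
  have hj1 : height g (j + 1) = height g j + 1 := by rw [height, hup, next]
  -- The step before the first return `t` to height `height g j` is the down-step matching `j`.
  have hex : ∃ t, j < t ∧ height g t ≤ height g j := ⟨m, hj, by omega⟩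
  obtain ⟨t, ⟨hjt, ht⟩, htm, hmin⟩ : ∃ t, (j < t ∧ height g t ≤ height g j) ∧ t ≤ m ∧
      ∀ s, j < s → s < t → height g j < height g s :=
    ⟨Nat.find hex, Nat.find_spec hex, Nat.find_le ⟨hj, by omega⟩,
      fun s hjs hst => by by_contra! h; exact Nat.find_min hex hst ⟨hjs, h⟩⟩
  obtain ⟨i, rfl⟩ : ∃ i, t = i + 1 := ⟨t - 1, by omega⟩
  have hji : j < i := by
    by_contra
    obtain rfl : j = i := by omega
    omega
  have hi := hmin i hji (by omega)
  have := height_succ_le g i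
  have hdown : g i = down := by
    cases h : g i <;> simp only [height, h, next] at ht ⊢ <;> omega
  have hpred := height_succ_of_down hdown
  obtain ⟨hmi, -, hmate⟩ := mate_spec hg (Nat.lt_of_succ_le htm) hdown
  have hjm : j ≤ mate g i := Nat.le_findGreatest hji.le ⟨hup, by omega⟩
  refine ⟨i, hji, by omega, hdown, le_antisymm (not_lt.1 fun h => ?_) hjm⟩
  have := hmin (mate g i) h (by omega)
  omega

end Matching

lemma pair_ne_singleton {α : Type*} [DecidableEq α] {a b c : α} (hab : a ≠ b) :
    ({a, b} : Finset α) ≠ {c} := by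
  intro h
  have ha : a ∈ ({c} : Finset α) := h ▸ mem_insert_self a {b}
  have hb : b ∈ ({c} : Finset α) := h ▸ by simp
  exact hab ((mem_singleton.1 ha).trans (mem_singleton.1 hb).symm)

lemma eq_singleton_or_pair_of_card_le_two {α : Type*} [LinearOrder α] {V : Finset α}
    (hV : V.Nonempty) (h2 : #V ≤ 2) : (∃ v, V = {v}) ∨ ∃ a b, a < b ∧ V = {a, b} := by
  rcases (by have := hV.card_pos; omega : #V = 1 ∨ #V = 2) with h | h
  · exact .inl (card_eq_one.1 h)
  · obtain ⟨x, y, hxy, rfl⟩ := card_eq_two.1 h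
    rcases hxy.lt_or_gt with h | h
    · exact .inr ⟨x, y, h, rfl⟩
    · exact .inr ⟨y, x, h, pair_comm x y⟩

lemma card_eq_add_one_of_erase_eq {α : Type*} [DecidableEq α] {s t : Finset α} {a : α}
    (h : s.erase a = t.erase a) (hs : a ∈ s) (ht : a ∉ t) : #s = #t + 1 := by
  rw [← card_erase_add_one hs, h, erase_eq_of_notMem ht]

section ToPath

variable {m : ℕ} {σ : Finpartition (univ : Finset (Fin m))}

lemma eq_singleton_or_pair (hc2 : ∀ V ∈ σ.parts, #V ≤ 2) {V : Finset (Fin m)}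
    (hV : V ∈ σ.parts) : (∃ v, V = {v}) ∨ ∃ a b, a < b ∧ V = {a, b} :=
  eq_singleton_or_pair_of_card_le_two (σ.nonempty_of_mem_parts hV) (hc2 V hV)

lemma block_cases (hc2 : ∀ V ∈ σ.parts, #V ≤ 2) (i : Fin m) :
    {i} ∈ σ.parts ∨ (∃ b, i < b ∧ {i, b} ∈ σ.parts) ∨ ∃ a, a < i ∧ {a, i} ∈ σ.parts := by
  have hB : σ.part i ∈ σ.parts := σ.part_mem.2 (mem_univ i)
  have hi : i ∈ σ.part i := σ.mem_part (mem_univ i)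
  rcases eq_singleton_or_pair hc2 hB with ⟨v, hv⟩ | ⟨a, b, hab, hv⟩ <;> rw [hv] at hB hi
  · obtain rfl := mem_singleton.1 hi
    exact .inl hB
  · rcases mem_insert.1 hi with rfl | hib
    · exact .inr (.inl ⟨b, hab, hB⟩)
    · obtain rfl := mem_singleton.1 hib
      exact .inr (.inr ⟨a, hab, hB⟩)

def toPath (σ : Finpartition (univ : Finset (Fin m))) (i : Fin m) : Step :=
  if σ.part i = {i} then flat else if ∀ x ∈ σ.part i, i ≤ x then up else down

lemma toPath_of_singleton {i : Fin m} (h : {i} ∈ σ.parts) : toPath σ i = flat := by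
  rw [toPath, if_pos (σ.part_eq_of_mem h (mem_singleton_self i))]

lemma toPath_left {a b : Fin m} (h : {a, b} ∈ σ.parts) (hab : a < b) : toPath σ a = up := by
  rw [toPath, σ.part_eq_of_mem h (by simp), if_neg (pair_ne_singleton hab.ne), if_pos]
  simpa using hab.le

lemma toPath_right {a b : Fin m} (h : {a, b} ∈ σ.parts) (hab : a < b) :
    toPath σ b = down := by
  rw [toPath, σ.part_eq_of_mem h (by simp), if_neg (pair_ne_singleton hab.ne), if_neg]
  simpa using hab

def openArcs (σ : Finpartition (univ : Finset (Fin m))) (i : ℕ) : Finset (Finset (Fin m)) :=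
  σ.parts.filter fun V => (∃ x ∈ V, (x : ℕ) < i) ∧ ∃ y ∈ V, i ≤ (y : ℕ)

lemma singleton_notMem_openArcs (i : ℕ) (v : Fin m) : {v} ∉ openArcs σ i := by
  simp only [openArcs, mem_filter, mem_singleton, exists_eq_left]
  omega

lemma pair_mem_openArcs {a b : Fin m} (h : {a, b} ∈ σ.parts) (hab : a < b) (i : ℕ) :
    {a, b} ∈ openArcs σ i ↔ (a : ℕ) < i ∧ i ≤ b := by
  have : (a : ℕ) < b := hab
  simp only [openArcs, mem_filter, h, true_and, mem_insert, mem_singleton, exists_eq_or_imp,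
    exists_eq_left]
  omega

lemma openArcs_succ_erase (i : Fin m) :
    (openArcs σ (i + 1)).erase (σ.part i) = (openArcs σ i).erase (σ.part i) := by
  ext V
  simp only [mem_erase, openArcs, mem_filter, and_congr_right_iff]
  intro hVi hV
  have hi : ∀ x ∈ V, (x : ℕ) ≠ i := fun x hx hxi =>
    hVi (σ.part_eq_of_mem hV (Fin.ext hxi ▸ hx)).symm
  constructor <;> rintro ⟨⟨x, hx, hxi⟩, y, hy, hyi⟩ <;>
    exact ⟨⟨x, hx, by have := hi x hx; omega⟩, y, hy, by have := hi y hy; omega⟩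

lemma height_toPath (hc2 : ∀ V ∈ σ.parts, #V ≤ 2) {i : ℕ} (hi : i ≤ m) :
    height (extend (toPath σ)) i = #(openArcs σ i) := by
  induction i with
  | zero => simp [height, openArcs]
  | succ i ih =>
    set j : Fin m := ⟨i, hi⟩
    have herase := openArcs_succ_erase (σ := σ) j
    rw [height, ih (by omega), extend_apply (toPath σ) j]
    rcases block_cases hc2 j with h | ⟨b, hjb, h⟩ | ⟨a, haj, h⟩
    · rw [σ.part_eq_of_mem h (mem_singleton_self j), erase_eq_of_notMem
        (singleton_notMem_openArcs _ _), erase_eq_of_notMem (singleton_notMem_openArcs _ _)]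
        at herase
      rw [toPath_of_singleton h, next, herase]
    · rw [σ.part_eq_of_mem h (by simp)] at herase
      have : (j : ℕ) < b := hjb
      rw [toPath_left h hjb, next, card_eq_add_one_of_erase_eq herase
        ((pair_mem_openArcs h hjb _).2 (by omega)) (by rw [pair_mem_openArcs h hjb]; omega)]
    · rw [σ.part_eq_of_mem h (by simp)] at herase
      have : (a : ℕ) < j := haj
      rw [toPath_right h haj, next, card_eq_add_one_of_erase_eq herase.symm
        ((pair_mem_openArcs h haj _).2 (by omega)) (by rw [pair_mem_openArcs h haj]; omega),
        Nat.add_sub_cancel]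

lemma depth_eq_card_openArcs (hnc : IsNoncrossing σ) {V : Finset (Fin m)} (hV : V ∈ σ.parts)
    {a : Fin m} (ha : a ∈ V) (hmin : ∀ x ∈ V, a ≤ x) : depth σ V = #(openArcs σ a) := by
  rw [depth, openArcs]
  congr 1
  refine filter_congr fun U hU => ⟨?_, ?_⟩
  · rintro ⟨hUV, r, hr, s, hs, hrs⟩
    have hra : r < a :=
      lt_of_le_of_ne (hrs a ha).1 fun h => hUV (σ.eq_of_mem_parts hU hV hr (h ▸ ha))
    exact ⟨⟨r, hr, hra⟩, s, hs, (hrs a ha).2⟩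
  · rintro ⟨⟨x, hx, hxa⟩, y, hy, hay⟩
    have hUV : U ≠ V := fun h => absurd (hmin x (h ▸ hx)) (not_le.2 hxa)
    have hay : a < y := lt_of_le_of_ne hay fun h => hUV (σ.eq_of_mem_parts hU hV hy (h ▸ ha))
    exact ⟨hUV, x, hx, y, hy, fun k hk =>
      let h := hnc.between hU hV hUV hx hy ha hxa hay hk; ⟨h.1.le, h.2.le⟩⟩

lemma neverBelowZero_toPath (hc2 : ∀ V ∈ σ.parts, #V ≤ 2) :
    NeverBelowZero (extend (toPath σ)) m := by
  intro i hi hdown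
  rw [height_toPath hc2 hi.le, card_pos]
  rcases block_cases hc2 ⟨i, hi⟩ with h | ⟨b, hb, h⟩ | ⟨a, ha, h⟩ <;>
    rw [extend_apply (toPath σ) ⟨i, hi⟩] at hdown
  · simp [toPath_of_singleton h] at hdown
  · simp [toPath_left h hb] at hdown
  · exact ⟨_, (pair_mem_openArcs h ha i).2 ⟨ha, le_rfl⟩⟩

lemma height_toPath_self (hc2 : ∀ V ∈ σ.parts, #V ≤ 2) : height (extend (toPath σ)) m = 0 := by
  rw [height_toPath hc2 le_rfl, card_eq_zero, openArcs, filter_eq_empty_iff]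
  rintro V - ⟨-, y, -, hy⟩
  exact absurd y.isLt (not_lt.2 hy)

lemma pathWeight_toPath (hnc : IsNoncrossing σ) (hc2 : ∀ V ∈ σ.parts, #V ≤ 2) (β γ : ℕ → ℝ) :
    pathWeight β γ (extend (toPath σ)) m =
      (∏ V ∈ σ.parts.filter (fun V => #V = 1), β (depth σ V)) *
      (∏ V ∈ σ.parts.filter (fun V => #V = 2), γ (depth σ V)) := by
  rw [prod_filter, prod_filter, ← prod_mul_distrib, pathWeight, ← Fin.prod_univ_eq_prod_range,
    prod_congr σ.biUnion_parts.symm fun _ _ => rfl, prod_biUnion σ.supIndep.pairwiseDisjoint]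
  refine prod_congr rfl fun V hV => ?_
  rw [id]
  rcases eq_singleton_or_pair hc2 hV with ⟨v, rfl⟩ | ⟨a, b, hab, rfl⟩
  · rw [depth_eq_card_openArcs hnc hV (mem_singleton_self v) (by simp)]
    simp [extend_apply, height_toPath hc2 v.isLt.le, toPath_of_singleton hV, weight]
  · rw [depth_eq_card_openArcs hnc hV (mem_insert_self a {b}) (by simpa using hab.le),
      prod_pair hab.ne]
    simp [extend_apply, height_toPath hc2 a.isLt.le, toPath_left hV hab, toPath_right hV hab,
      weight, card_pair hab.ne]

end ToPath

section MateOfToPath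

variable {m : ℕ} {σ : Finpartition (univ : Finset (Fin m))} {a b : Fin m}

lemma mem_openArcs_of_pair (hnc : IsNoncrossing σ) (hV : {a, b} ∈ σ.parts) (hab : a < b)
    {U : Finset (Fin m)} (hU : U ∈ openArcs σ a) {k : ℕ} (hak : (a : ℕ) ≤ k) (hkb : k ≤ b + 1) :
    U ∈ openArcs σ k := by
  simp only [openArcs, mem_filter] at hU ⊢
  obtain ⟨hU, ⟨x, hx, hxa⟩, y, hy, hay⟩ := hU
  have hUV : U ≠ {a, b} := fun h => absurd (h ▸ hx : x ∈ ({a, b} : Finset _)) (by simp; omega)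
  have hay : a < y := lt_of_le_of_ne hay fun h => hUV (σ.eq_of_mem_parts hU hV hy (by simp [h]))
  have hby := (hnc.between hU hV hUV hx hy (by simp) hxa hay (b := b) (by simp)).2
  have : (b : ℕ) < y := hby
  exact ⟨hU, ⟨x, hx, by omega⟩, y, hy, by omega⟩

lemma openArcs_succ_right (hnc : IsNoncrossing σ) (hV : {a, b} ∈ σ.parts) (hab : a < b) :
    openArcs σ (b + 1) = openArcs σ a := by
  refine Subset.antisymm (fun U hU => ?_) fun U hU => mem_openArcs_of_pair hnc hV hab hU
    (by have : (a : ℕ) < b := hab; omega) le_rfl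
  simp only [openArcs, mem_filter] at hU ⊢
  obtain ⟨hU, ⟨x, hx, hxb⟩, y, hy, hby⟩ := hU
  have hUV : U ≠ {a, b} := fun h => absurd (h ▸ hy : y ∈ ({a, b} : Finset _)) (by
    have : (a : ℕ) < b := hab; simp; omega)
  have hxb : x < b := lt_of_le_of_ne (Nat.lt_succ_iff.1 hxb) fun h =>
    hUV (σ.eq_of_mem_parts hU hV hx (by simp [h]))
  have hxa := (hnc.between hU hV hUV hx hy (by simp) hxb hby (b := a) (by simp)).1
  have : (a : ℕ) < b := hab
  exact ⟨hU, ⟨x, hx, hxa⟩, y, hy, by have : (b : ℕ) < y := hby; omega⟩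

lemma mate_toPath (hnc : IsNoncrossing σ) (hc2 : ∀ V ∈ σ.parts, #V ≤ 2)
    (hV : {a, b} ∈ σ.parts) (hab : a < b) : mate (extend (toPath σ)) b = a := by
  have hab' : (a : ℕ) < b := hab
  have hheight : ∀ {k : ℕ}, k ≤ b + 1 → height (extend (toPath σ)) k = #(openArcs σ k) :=
    fun hk => height_toPath hc2 (by have := b.isLt; omega)
  refine Nat.findGreatest_eq_iff.2 ⟨hab'.le, fun _ => ⟨?_, ?_⟩, fun k hak hkb hk => ?_⟩
  · rw [extend_apply, toPath_left hV hab]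
  · rw [hheight (by omega), hheight le_rfl, openArcs_succ_right hnc hV hab]
  · replace hk := hk.2
    rw [hheight (by omega), hheight le_rfl, openArcs_succ_right hnc hV hab] at hk
    refine (card_lt_card ((ssubset_iff_of_subset fun U hU => mem_openArcs_of_pair hnc hV hab hU
      hak.le (by omega)).2 ⟨{a, b}, ?_, ?_⟩)).ne' hk
    · exact (pair_mem_openArcs hV hab k).2 ⟨hak, hkb⟩
    · rw [pair_mem_openArcs hV hab]
      omega

end MateOfToPath

section FromPath

variable {m : ℕ} {f : Fin m → Step}

def partner (f : Fin m → Step) (i : Fin m) : Fin m :=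
  ⟨mate (extend f) i, (mate_le _ _).trans_lt i.isLt⟩

lemma partner_spec (hf : NeverBelowZero (extend f) m) {i : Fin m} (hi : f i = down) :
    partner f i < i ∧ f (partner f i) = up := by
  obtain ⟨hlt, hup, -⟩ := mate_spec hf i.isLt (by rwa [extend_apply])
  exact ⟨hlt, by rwa [← extend_apply f (partner f i)]⟩

lemma partner_injective (hf : NeverBelowZero (extend f) m) {i i' : Fin m} (hi : f i = down)
    (hi' : f i' = down) (h : partner f i = partner f i') : i = i' :=
  Fin.ext <| mate_injective hf i.isLt (by rwa [extend_apply]) i'.isLt (by rwa [extend_apply])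
    (Fin.val_eq_of_eq h)

lemma exists_partner (hf : NeverBelowZero (extend f) m) (hf0 : height (extend f) m = 0)
    {j : Fin m} (hj : f j = up) : ∃ i, j < i ∧ f i = down ∧ partner f i = j := by
  obtain ⟨i, hji, him, hi, hmate⟩ := exists_mate hf hf0 j.isLt (by rwa [extend_apply])
  exact ⟨⟨i, him⟩, hji, by rwa [← extend_apply f ⟨i, him⟩], Fin.ext hmate⟩

def closedBlock (f : Fin m → Step) (i : Fin m) : Finset (Fin m) :=
  if f i = flat then {i} else {partner f i, i}

lemma mem_closedBlock {i x : Fin m} :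
    x ∈ closedBlock f i ↔ x = i ∨ f i ≠ flat ∧ x = partner f i := by
  unfold closedBlock
  split_ifs with h <;> simp [h, or_comm]

lemma closedBlock_of_flat {i : Fin m} (h : f i = flat) : closedBlock f i = {i} := if_pos h

lemma closedBlock_of_ne_flat {i : Fin m} (h : f i ≠ flat) :
    closedBlock f i = {partner f i, i} := if_neg h

def pathParts (f : Fin m → Step) : Finset (Finset (Fin m)) :=
  (univ.filter (f · ≠ up)).image (closedBlock f)

lemma closedBlock_mem_pathParts {i : Fin m} (hi : f i ≠ up) : closedBlock f i ∈ pathParts f :=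
  mem_image_of_mem _ (mem_filter.2 ⟨mem_univ i, hi⟩)

lemma eq_of_mem_closedBlock (hf : NeverBelowZero (extend f) m) {i i' x : Fin m}
    (hi : f i ≠ up) (hi' : f i' ≠ up) (hx : x ∈ closedBlock f i) (hx' : x ∈ closedBlock f i') :
    i = i' := by
  have hdown : ∀ {j}, f j ≠ up → f j ≠ flat → f j = down := by
    intro j h h'; cases hj : f j <;> simp_all
  rw [mem_closedBlock] at hx hx'
  rcases hx with rfl | ⟨hfl, rfl⟩ <;> rcases hx' with h | ⟨hfl', h⟩
  · exact h
  · exact absurd (h ▸ (partner_spec hf (hdown hi' hfl')).2) hi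
  · exact absurd (h ▸ (partner_spec hf (hdown hi hfl)).2) hi'
  · exact partner_injective hf (hdown hi hfl) (hdown hi' hfl') h

lemma exists_mem_pathParts (hf : NeverBelowZero (extend f) m) (hf0 : height (extend f) m = 0)
    (x : Fin m) : ∃ W ∈ pathParts f, x ∈ W := by
  by_cases hx : f x = up
  · obtain ⟨i, -, hi, rfl⟩ := exists_partner hf hf0 hx
    exact ⟨_, closedBlock_mem_pathParts (i := i) (by simp [hi]), mem_closedBlock.2
      (.inr ⟨by simp [hi], rfl⟩)⟩
  · exact ⟨_, closedBlock_mem_pathParts hx, mem_closedBlock.2 (.inl rfl)⟩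

lemma eq_of_mem_pathParts (hf : NeverBelowZero (extend f) m) {W W' : Finset (Fin m)}
    (hW : W ∈ pathParts f) (hW' : W' ∈ pathParts f) {x : Fin m} (hx : x ∈ W) (hx' : x ∈ W') :
    W = W' := by
  simp only [pathParts, mem_image, mem_filter, mem_univ, true_and] at hW hW'
  obtain ⟨i, hi, rfl⟩ := hW
  obtain ⟨i', hi', rfl⟩ := hW'
  rw [eq_of_mem_closedBlock hf hi hi' hx hx']

lemma pair_of_mem_pathParts (hf : NeverBelowZero (extend f) m) {W : Finset (Fin m)}
    (hW : W ∈ pathParts f) {x y : Fin m} (hx : x ∈ W) (hy : y ∈ W) (hxy : x < y) :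
    f y = down ∧ partner f y = x := by
  simp only [pathParts, mem_image, mem_filter, mem_univ, true_and] at hW
  obtain ⟨i, hi, rfl⟩ := hW
  have hdown : f i ≠ flat → f i = down := by intro h; cases hj : f i <;> simp_all
  rw [mem_closedBlock] at hx hy
  rcases hy with rfl | ⟨hfl, rfl⟩
  · rcases hx with rfl | ⟨hfl, rfl⟩
    · exact absurd hxy (lt_irrefl x)
    · exact ⟨hdown hfl, rfl⟩
  · have := (partner_spec hf (hdown hfl)).1
    rcases hx with rfl | ⟨-, rfl⟩ <;> exact absurd hxy (by order)

def pathPartition (f : Fin m → Step) (hf : NeverBelowZero (extend f) m)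
    (hf0 : height (extend f) m = 0) : Finpartition (univ : Finset (Fin m)) :=
  Finpartition.ofExistsUnique (pathParts f) (fun _ _ => subset_univ _)
    (fun x _ => (exists_mem_pathParts hf hf0 x).elim fun W hW =>
      ⟨W, hW, fun W' hW' => eq_of_mem_pathParts hf hW'.1 hW.1 hW'.2 hW.2⟩)
    fun h => by
      obtain ⟨i, -, hi⟩ := mem_image.1 h
      have : i ∈ closedBlock f i := mem_closedBlock.2 (.inl rfl)
      simp [hi] at this

end FromPath

section Bijection

variable {m : ℕ}

lemma toPath_pathPartition {f : Fin m → Step} (hf : NeverBelowZero (extend f) m)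
    (hf0 : height (extend f) m = 0) : toPath (pathPartition f hf hf0) = f := by
  funext x
  cases hx : f x
  · obtain ⟨i, hxi, hi, rfl⟩ := exists_partner hf hf0 hx
    refine toPath_left (b := i) ?_ hxi
    rw [← closedBlock_of_ne_flat (by simp [hi])]
    exact closedBlock_mem_pathParts (by simp [hi])
  · refine toPath_of_singleton ?_
    rw [← closedBlock_of_flat hx]
    exact closedBlock_mem_pathParts (by simp [hx])
  · refine toPath_right ?_ (partner_spec hf hx).1
    rw [← closedBlock_of_ne_flat (by simp [hx])]
    exact closedBlock_mem_pathParts (by simp [hx])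

/-- Two crossing pairs `x₁ < x₂ < x₃ < x₄` would give the impossible chain of heights
`h x₁ < h x₂ < h (x₃ + 1) = h x₁`. -/
lemma isNoncrossing_pathPartition {f : Fin m → Step} (hf : NeverBelowZero (extend f) m)
    (hf0 : height (extend f) m = 0) : IsNoncrossing (pathPartition f hf hf0) := by
  intro V₁ hV₁ V₂ hV₂ x₁ x₂ x₃ x₄ h₁₂ h₂₃ h₃₄ hx₁ hx₃ hx₂ hx₄
  obtain ⟨hd₁, hp₁⟩ := pair_of_mem_pathParts hf hV₁ hx₁ hx₃ (h₁₂.trans h₂₃)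
  obtain ⟨hd₂, hp₂⟩ := pair_of_mem_pathParts hf hV₂ hx₂ hx₄ (h₂₃.trans h₃₄)
  have e₁ : mate (extend f) x₃ = x₁ := congrArg Fin.val hp₁
  have e₂ : mate (extend f) x₄ = x₂ := congrArg Fin.val hp₂
  have h₁₂' : (x₁ : ℕ) < x₂ := h₁₂
  have h₂₃' : (x₂ : ℕ) < x₃ := h₂₃
  have h₁ := height_mate_lt hf x₃.isLt (by rwa [extend_apply]) (t := x₂) (by omega) h₂₃.le
  have h₂ := height_mate_lt hf x₄.isLt (by rwa [extend_apply]) (t := x₃ + 1) (by omega) h₃₄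
  have h₃ := (mate_spec hf x₃.isLt (by rwa [extend_apply])).2.2
  rw [e₁] at h₁ h₃
  rw [e₂] at h₂
  omega

lemma card_le_two_of_mem_pathParts {f : Fin m → Step} {W : Finset (Fin m)}
    (hW : W ∈ pathParts f) : #W ≤ 2 := by
  obtain ⟨i, -, rfl⟩ := mem_image.1 hW
  unfold closedBlock
  split_ifs
  · simp
  · exact card_le_two

variable {σ : Finpartition (univ : Finset (Fin m))}

lemma parts_eq_pathParts (hnc : IsNoncrossing σ) (hc2 : ∀ V ∈ σ.parts, #V ≤ 2) :
    σ.parts = pathParts (toPath σ) := by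
  have hpartner : ∀ {a b}, {a, b} ∈ σ.parts → a < b → partner (toPath σ) b = a :=
    fun hV hab => Fin.ext (mate_toPath hnc hc2 hV hab)
  ext V
  refine ⟨fun hV => ?_, fun hV => ?_⟩
  · rcases eq_singleton_or_pair hc2 hV with ⟨v, rfl⟩ | ⟨a, b, hab, rfl⟩
    · rw [← closedBlock_of_flat (toPath_of_singleton hV)]
      exact closedBlock_mem_pathParts (by simp [toPath_of_singleton hV])
    · have hb : toPath σ b = down := toPath_right hV hab
      rw [← hpartner hV hab, ← closedBlock_of_ne_flat (by simp [hb])]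
      exact closedBlock_mem_pathParts (by simp [hb])
  · obtain ⟨i, hi, rfl⟩ := mem_image.1 hV
    rcases block_cases hc2 i with h | ⟨b, hb, h⟩ | ⟨a, ha, h⟩
    · simpa [closedBlock, toPath_of_singleton h] using h
    · simp [toPath_left h hb] at hi
    · simpa [closedBlock, toPath_right h ha, hpartner h ha] using h

end Bijection

theorem sum_NC12_eq_motzkinSum (β γ : ℕ → ℝ) (m : ℕ) :
    ∑ σ ∈ NC12 m, (∏ V ∈ σ.parts.filter (fun V => #V = 1), β (depth σ V)) *
      (∏ V ∈ σ.parts.filter (fun V => #V = 2), γ (depth σ V)) = motzkinSum β γ m 0 := by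
  have hNC : ∀ σ, σ ∈ NC12 m ↔ IsNoncrossing σ ∧ ∀ V ∈ σ.parts, #V ≤ 2 := by simp [NC12]
  have hpath : ∀ f : Fin m → Step, f ∈ univ.filter (fun f => NeverBelowZero (extend f) m ∧
      height (extend f) m = 0) ↔ NeverBelowZero (extend f) m ∧ height (extend f) m = 0 := by simp
  rw [motzkinSum, ← sum_filter]
  refine sum_nbij toPath (fun σ hσ => ?_) (fun σ hσ τ hτ h => ?_) (fun f hf => ?_) fun σ hσ => ?_
  · obtain ⟨-, hc2⟩ := (hNC σ).1 hσ
    exact (hpath _).2 ⟨neverBelowZero_toPath hc2, height_toPath_self hc2⟩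
  · obtain ⟨hnc, hc2⟩ := (hNC σ).1 hσ
    obtain ⟨hnc', hc2'⟩ := (hNC τ).1 hτ
    exact Finpartition.ext ((parts_eq_pathParts hnc hc2).trans
      (h ▸ (parts_eq_pathParts hnc' hc2').symm))
  · obtain ⟨hf, hf0⟩ := (hpath f).1 hf
    exact ⟨pathPartition f hf hf0, (hNC _).2 ⟨isNoncrossing_pathPartition hf hf0,
      fun W hW => card_le_two_of_mem_pathParts hW⟩, toPath_pathPartition hf hf0⟩
  · obtain ⟨hnc, hc2⟩ := (hNC σ).1 hσ
    exact (pathWeight_toPath hnc hc2 β γ).symm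

end AccardiBozejko

/-- Accardi–Bożejko formula: moments are sums over noncrossing pair-singleton
partitions of products of Jacobi parameters indexed by depths. -/
theorem stmt_0 (μ : Measure ℝ) [IsProbabilityMeasure μ] (hfin : FiniteMoments μ)
    (β γ : ℕ → ℝ) (hJ : HasJacobi μ β γ) (m : ℕ) :
    mom μ m = ∑ σ ∈ NC12 m,
      (∏ V ∈ σ.parts.filter (fun V => V.card = 1), β (depth σ V)) *
      (∏ V ∈ σ.parts.filter (fun V => V.card = 2), γ (depth σ V)) := by
  rw [AccardiBozejko.mom_eq_motzkinSum β γ hfin hJ, AccardiBozejko.sum_NC12_eq_motzkinSum]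
end
end

section
/- Let μ be a probability measure with finite moments, Jacobi parameters (β_n, γ_n), and free cumulants r_n. Then r_3 = γ_0(β_1 − β_0). -/
open scoped Classical
open MeasureTheory Finset

noncomputable section

set_option maxRecDepth 40000

instance myDecEqFinpartition {α : Type*} [DecidableEq α] {s : Finset α} :
    DecidableEq (Finpartition s) :=
  fun a b => decidable_of_iff (a.parts = b.parts) ⟨fun h => by ext1; exact h, fun h => by rw [h]⟩

def mkP {m : ℕ} (ps : Finset (Finset (Fin m)))
    (h : ps.sup id = Finset.univ ∧ ⊥ ∉ ps ∧ ps.SupIndep id := by decide) :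
    Finpartition (Finset.univ : Finset (Fin m)) :=
  ⟨ps, h.2.2, h.1, h.2.1⟩

lemma ncset_eq_univ (m : ℕ) (hm : m ≤ 3) : NCset m = Finset.univ := by
  ext π
  simp only [NCset, Finset.mem_filter, Finset.mem_univ, true_and, iff_true]
  intro V₁ _ V₂ _ x₁ x₂ x₃ x₄ h12 h23 h34 _ _ _ _
  have a1 : (x₁:ℕ) < x₂ := h12
  have a2 : (x₂:ℕ) < x₃ := h23
  have a3 : (x₃:ℕ) < x₄ := h34
  have := x₄.isLt
  omega

lemma sumNC1 (r : ℕ → ℝ) : ∑ π ∈ NCset 1, ∏ V ∈ π.parts, r V.card = r 1 := by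
  rw [ncset_eq_univ 1 (by norm_num),
    show (Finset.univ : Finset (Finpartition (univ : Finset (Fin 1)))) = {mkP {{0}}} from by decide]
  simp [mkP]

lemma sumNC2 (r : ℕ → ℝ) :
    ∑ π ∈ NCset 2, ∏ V ∈ π.parts, r V.card = r 2 + r 1 * r 1 := by
  rw [ncset_eq_univ 2 (by norm_num),
    show (Finset.univ : Finset (Finpartition (univ : Finset (Fin 2)))) =
      {mkP {{0,1}}, mkP {{0},{1}}} from by decide]
  rw [Finset.sum_insert (by decide), Finset.sum_singleton]
  show (∏ V ∈ ({{0,1}} : Finset (Finset (Fin 2))), r V.card)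
    + ∏ V ∈ ({{0},{1}} : Finset (Finset (Fin 2))), r V.card = _
  rw [Finset.prod_singleton, Finset.prod_insert (by decide), Finset.prod_singleton]
  norm_num

lemma sumNC3 (r : ℕ → ℝ) : ∑ π ∈ NCset 3, ∏ V ∈ π.parts, r V.card
    = r 3 + 3 * (r 2 * r 1) + r 1 * r 1 * r 1 := by
  rw [ncset_eq_univ 3 (by norm_num),
    show (Finset.univ : Finset (Finpartition (univ : Finset (Fin 3)))) =
      {mkP {{0},{1},{2}}, mkP {{0,1},{2}}, mkP {{0},{1,2}}, mkP {{0,2},{1}}, mkP {{0,1,2}}}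
      from by decide]
  rw [Finset.sum_insert (by decide), Finset.sum_insert (by decide),
    Finset.sum_insert (by decide), Finset.sum_insert (by decide), Finset.sum_singleton]
  show (∏ V ∈ ({{0},{1},{2}} : Finset (Finset (Fin 3))), r V.card)
    + ((∏ V ∈ ({{0,1},{2}} : Finset (Finset (Fin 3))), r V.card)
    + ((∏ V ∈ ({{0},{1,2}} : Finset (Finset (Fin 3))), r V.card)
    + ((∏ V ∈ ({{0,2},{1}} : Finset (Finset (Fin 3))), r V.card)
    + ∏ V ∈ ({{0,1,2}} : Finset (Finset (Fin 3))), r V.card))) = _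
  rw [Finset.prod_insert (by decide), Finset.prod_insert (by decide), Finset.prod_singleton,
    Finset.prod_insert (by decide), Finset.prod_singleton,
    Finset.prod_insert (by decide), Finset.prod_singleton,
    Finset.prod_insert (by decide), Finset.prod_singleton,
    Finset.prod_singleton]
  norm_num [show ({1,2}:Finset (Fin 3)).card = 2 from by decide,
    show ({0,2}:Finset (Fin 3)).card = 2 from by decide,
    show ({0,1,2}:Finset (Fin 3)).card = 3 from by decide]
  ring

lemma int_poly3 (μ : Measure ℝ) [IsProbabilityMeasure μ] (hfin : FiniteMoments μ)
    (a b c d : ℝ) :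
    ∫ x, (a * x^3 + b * x^2 + c * x + d) ∂μ
      = a * mom μ 3 + b * mom μ 2 + c * mom μ 1 + d := by
  have h3 : Integrable (fun x : ℝ => a * x^3) μ := (hfin 3).const_mul a
  have h2 : Integrable (fun x : ℝ => b * x^2) μ := (hfin 2).const_mul b
  have h1 : Integrable (fun x : ℝ => c * x) μ := by
    have := (hfin 1).const_mul c; simpa using this
  have h321 : Integrable (fun x : ℝ => a * x^3 + b * x^2 + c * x) μ := by
    exact (h3.add h2).add h1
  have h32 : Integrable (fun x : ℝ => a * x^3 + b * x^2) μ := by exact h3.add h2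
  rw [integral_add h321 (integrable_const d),
    integral_add h32 h1, integral_add h3 h2,
    MeasureTheory.integral_const_mul, MeasureTheory.integral_const_mul,
    MeasureTheory.integral_const_mul, integral_const]
  simp [mom]

lemma moms_of_jacobi (μ : Measure ℝ) [IsProbabilityMeasure μ] (hfin : FiniteMoments μ)
    (β γ : ℕ → ℝ) (hJ : HasJacobi μ β γ) :
    mom μ 1 = β 0 ∧ mom μ 2 = β 0 ^ 2 + γ 0 ∧
      mom μ 3 = β 0 ^ 3 + 2 * β 0 * γ 0 + β 1 * γ 0 := by
  obtain ⟨P, hmon, hdeg, horth, hX0, hrec⟩ := hJ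
  have hP0 : P 0 = 1 := (hmon 0).natDegree_eq_zero.mp (hdeg 0)
  have hP1 : P 1 = Polynomial.X - Polynomial.C (β 0) := by
    linear_combination -hX0 + (Polynomial.X - Polynomial.C (β 0)) * hP0
  have hP2 : P 2 = Polynomial.X * Polynomial.X
      - (Polynomial.C (β 0) + Polynomial.C (β 1)) * Polynomial.X
      + (Polynomial.C (β 0) * Polynomial.C (β 1) - Polynomial.C (γ 0)) := by
    linear_combination -(hrec 0) + (Polynomial.X - Polynomial.C (β 1)) * hP1
      - Polynomial.C (γ 0) * hP0
  have hE0 : ∀ x : ℝ, (P 0).eval x = 1 := by simp [hP0]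
  have hE1 : ∀ x : ℝ, (P 1).eval x = x - β 0 := by simp [hP1]
  have hE2 : ∀ x : ℝ, (P 2).eval x = x^2 - (β 0 + β 1) * x + (β 0 * β 1 - γ 0) := by
    intro x; simp [hP2]; ring
  have hm1 : mom μ 1 = β 0 := by
    have h := horth 1 0 (by norm_num)
    have e : (fun x => (P 1).eval x * (P 0).eval x)
        = fun x : ℝ => 0 * x^3 + 0 * x^2 + 1 * x + (-(β 0)) := by
      funext x; rw [hE1, hE0]; ring
    rw [e, int_poly3 μ hfin] at h
    linarith
  have hm2 : mom μ 2 = β 0 ^ 2 + γ 0 := by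
    have h := horth 2 0 (by norm_num)
    have e : (fun x => (P 2).eval x * (P 0).eval x)
        = fun x : ℝ => 0 * x^3 + 1 * x^2 + (-(β 0 + β 1)) * x + (β 0 * β 1 - γ 0) := by
      funext x; rw [hE2, hE0]; ring
    rw [e, int_poly3 μ hfin, hm1] at h
    nlinarith [h]
  have hm3 : mom μ 3 = β 0 ^ 3 + 2 * β 0 * γ 0 + β 1 * γ 0 := by
    have h := horth 2 1 (by norm_num)
    have e : (fun x => (P 2).eval x * (P 1).eval x)
        = fun x : ℝ => 1 * x^3 + (-(2 * β 0 + β 1)) * x^2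
            + (β 0^2 + 2 * β 0 * β 1 - γ 0) * x + (-((β 0 * β 1 - γ 0) * β 0)) := by
      funext x; rw [hE2, hE1]; ring
    rw [e, int_poly3 μ hfin, hm1, hm2] at h
    nlinarith [h]
  exact ⟨hm1, hm2, hm3⟩

theorem stmt_2 (μ : Measure ℝ) [IsProbabilityMeasure μ] (hfin : FiniteMoments μ)
    (β γ : ℕ → ℝ) (hJ : HasJacobi μ β γ) (r : ℕ → ℝ) (hr : FreeCumulants μ r) :
    r 3 = γ 0 * (β 1 - β 0) := by
  obtain ⟨hm1, hm2, hm3⟩ := moms_of_jacobi μ hfin β γ hJ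
  have e1 : r 1 = β 0 := by
    have := hr 1 le_rfl; rw [hm1, sumNC1] at this; linarith
  have e2 : r 2 = γ 0 := by
    have := hr 2 (by norm_num); rw [hm2, sumNC2, e1] at this; nlinarith [this]
  have e3 := hr 3 (by norm_num)
  rw [hm3, sumNC3, e1, e2] at e3
  nlinarith [e3]
end
end

section
/- For any probability measure μ with finite moments, the Boolean convolution powers μ^{⊎t} have Jacobi parameters J(μ^{⊎t}) given by β_0(t) = β_0 t, γ_0(t) = γ_0 t, and β_n(t) = β_n, γ_n(t) = γ_n for all n ≥ 1, where (β_n, γ_n) are the Jacobi parameters of μ. In particular all Jacobi parameters of μ^{⊎t} are polynomial (degree ≤ 1) in t. -/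
open scoped Classical
open MeasureTheory Finset

noncomputable section

/-!
Let `J` be the Jacobi operator of `(β, γ)` on sequences, `(J v)ₙ = vₙ₋₁ + βₙ vₙ + γₙ vₙ₊₁`.
The orthogonal polynomials satisfy `Pₙ(J) e₀ = eₙ`, so the moments of `μ` are `mₖ = (Jᵏ e₀)₀`.
Splitting `Jᵏ e₀` at the first return to level `0` gives the renewal equation
`mₖ = ∑_{j=1}^k gⱼ mₖ₋ⱼ`, where `gⱼ` is the weight of the paths that first return to `0` at step
`j`; splitting an interval partition at its first block gives the same equation with the Boolean
cumulants in place of `g`. Hence the Boolean cumulants of `μ` are the `gⱼ`. Multiplying `β₀` and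
`γ₀` by `t` multiplies `(J v)₀` by `t` and leaves the other coordinates alone, so it multiplies
every `gⱼ` by `t`: the modified operator has the moments of `ν`, and its recurrence polynomials are
orthogonal for `ν`.
-/

def IsRenewal (c a : ℕ → ℝ) : Prop :=
  a 0 = 1 ∧ ∀ m, 1 ≤ m → a m = ∑ k ∈ Icc 1 m, c k * a (m - k)

namespace IsRenewal

variable {c c' a b : ℕ → ℝ}

theorem eq_of_weights_eq (ha : IsRenewal c a) (hb : IsRenewal c' b) (hc : ∀ k, 1 ≤ k → c k = c' k) :
    a = b := by
  funext m
  induction m using Nat.strong_induction_on with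
  | _ m ih =>
    rcases Nat.eq_zero_or_pos m with rfl | hm
    · rw [ha.1, hb.1]
    rw [ha.2 m hm, hb.2 m hm]
    refine sum_congr rfl fun k hk => ?_
    obtain ⟨hk1, hkm⟩ := mem_Icc.mp hk
    rw [hc k hk1, ih (m - k) (by omega)]

theorem weights_eq (ha : IsRenewal c a) (ha' : IsRenewal c' a) :
    ∀ k, 1 ≤ k → c k = c' k := by
  intro k
  induction k using Nat.strong_induction_on with
  | _ k ih =>
    intro hk
    obtain ⟨n, rfl⟩ : ∃ n, k = n + 1 := ⟨k - 1, by omega⟩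
    have hsplit := (ha.2 (n + 1) hk).symm.trans (ha'.2 (n + 1) hk)
    have hlow : ∑ j ∈ Icc 1 n, c j * a (n + 1 - j) = ∑ j ∈ Icc 1 n, c' j * a (n + 1 - j) :=
      sum_congr rfl fun j hj => by rw [ih j (by grind) (mem_Icc.mp hj).1]
    rw [sum_Icc_succ_top hk, sum_Icc_succ_top hk, hlow, Nat.sub_self, ha.1] at hsplit
    simpa using hsplit

end IsRenewal

open Polynomial

section JacobiOperator

variable (β γ : ℕ → ℝ)

def jacobiOp : Module.End ℝ (ℕ → ℝ) where
  toFun v n := (if n = 0 then 0 else v (n - 1)) + β n * v n + γ n * v (n + 1)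
  map_add' u v := by
    funext n
    simp only [Pi.add_apply]
    split_ifs <;> ring
  map_smul' r v := by
    funext n
    simp only [Pi.smul_apply, smul_eq_mul, RingHom.id_apply]
    split_ifs <;> ring

theorem jacobiOp_apply (v : ℕ → ℝ) (n : ℕ) :
    jacobiOp β γ v n = (if n = 0 then 0 else v (n - 1)) + β n * v n + γ n * v (n + 1) :=
  rfl

theorem jacobiOp_single_zero :
    jacobiOp β γ (Pi.single 0 1) = Pi.single 1 1 + β 0 • Pi.single 0 1 := by
  funext n
  rcases n with _ | _ | n <;> simp [jacobiOp_apply]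

theorem jacobiOp_single_succ (j : ℕ) :
    jacobiOp β γ (Pi.single (j + 1) 1) =
      Pi.single (j + 2) 1 + β (j + 1) • Pi.single (j + 1) 1 + γ j • Pi.single j 1 := by
  funext n
  simp only [jacobiOp_apply, Pi.single_apply, Pi.add_apply, Pi.smul_apply, smul_eq_mul]
  split_ifs <;> grind

theorem jacobiOp_pow_apply_zero_eq_zero :
    ∀ k (v : ℕ → ℝ), (∀ i ≤ k, v i = 0) → (jacobiOp β γ ^ k) v 0 = 0
  | 0, v, hv => hv 0 le_rfl
  | k + 1, v, hv => by
    rw [pow_succ, Module.End.mul_apply]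
    refine jacobiOp_pow_apply_zero_eq_zero k _ fun i hi => ?_
    simp only [jacobiOp_apply, hv i (by omega), hv (i + 1) (by omega), mul_zero, add_zero]
    split_ifs
    · rfl
    · exact hv (i - 1) (by omega)

theorem aeval_jacobiOp_single_apply_zero {p : ℝ[X]} {j : ℕ} (hp : p.natDegree < j) :
    aeval (jacobiOp β γ) p (Pi.single j 1) 0 = 0 := by
  rw [aeval_eq_sum_range, LinearMap.sum_apply, Finset.sum_apply]
  refine sum_eq_zero fun i hi => ?_
  have hij : i < j := by have := mem_range.mp hi; omega
  rw [LinearMap.smul_apply, Pi.smul_apply,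
    jacobiOp_pow_apply_zero_eq_zero β γ i _ fun l hl => Pi.single_eq_of_ne (by omega) _,
    smul_zero]

theorem aeval_jacobiOp_single_zero (P : ℕ → ℝ[X]) (h0 : P 0 = 1)
    (h1 : X * P 0 = P 1 + C (β 0) * P 0)
    (h2 : ∀ n, X * P (n + 1) = P (n + 2) + C (β (n + 1)) * P (n + 1) + C (γ n) * P n) :
    ∀ n, aeval (jacobiOp β γ) (P n) (Pi.single 0 1) = Pi.single n 1
  | 0 => by rw [h0, map_one]; rfl
  | 1 => by
    rw [eq_sub_of_add_eq h1.symm, h0]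
    simp [jacobiOp_single_zero]
  | n + 2 => by
    have ih₁ := aeval_jacobiOp_single_zero P h0 h1 h2 (n + 1)
    have ih₀ := aeval_jacobiOp_single_zero P h0 h1 h2 n
    rw [eq_sub_of_add_eq (eq_sub_of_add_eq (h2 n).symm)]
    simp only [map_sub, map_mul, aeval_X, aeval_C, LinearMap.sub_apply, Module.End.mul_apply,
      Module.algebraMap_end_apply, ih₁, ih₀, jacobiOp_single_succ]
    abel

end JacobiOperator

section FirstReturn

variable (β γ : ℕ → ℝ)

def jacobiMoment (m : ℕ) : ℝ := (jacobiOp β γ ^ m) (Pi.single 0 1) 0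

/- `excursion β γ m` holds the weights of the `m`-step paths from level `0` that have not yet come
back to `0` (the `0`-th coordinate is cleared after each step); `firstReturn β γ k` is the weight
of the paths returning to `0` for the first time at step `k`. -/
def excursion : ℕ → ℕ → ℝ
  | 0 => Pi.single 0 1
  | m + 1 => Function.update (jacobiOp β γ (excursion m)) 0 0

def firstReturn : ℕ → ℝ
  | 0 => 0
  | k + 1 => jacobiOp β γ (excursion β γ k) 0

theorem jacobiOp_excursion (m : ℕ) :
    jacobiOp β γ (excursion β γ m) =
      excursion β γ (m + 1) + firstReturn β γ (m + 1) • Pi.single 0 1 := by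
  funext n
  rcases eq_or_ne n 0 with rfl | hn
  · simp [excursion, firstReturn]
  · simp [excursion, firstReturn, hn]

theorem jacobiOp_pow_single_zero (m : ℕ) :
    (jacobiOp β γ ^ m) (Pi.single 0 1) =
      excursion β γ m +
        ∑ k ∈ Icc 1 m, firstReturn β γ k • (jacobiOp β γ ^ (m - k)) (Pi.single 0 1) := by
  induction m with
  | zero => simp [excursion]
  | succ m ih =>
    have hshift : ∀ k ∈ Icc 1 m,
        jacobiOp β γ (firstReturn β γ k • (jacobiOp β γ ^ (m - k)) (Pi.single 0 1)) =
          firstReturn β γ k • (jacobiOp β γ ^ (m + 1 - k)) (Pi.single 0 1) := by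
      intro k hk
      rw [map_smul, Nat.sub_add_comm (mem_Icc.mp hk).2, pow_succ', Module.End.mul_apply]
    rw [pow_succ', Module.End.mul_apply, ih, map_add, map_sum, sum_congr rfl hshift,
      jacobiOp_excursion, sum_Icc_succ_top (by omega), Nat.sub_self, pow_zero, Module.End.one_apply]
    abel

theorem isRenewal_jacobiMoment : IsRenewal (firstReturn β γ) (jacobiMoment β γ) := by
  refine ⟨by simp [jacobiMoment], fun m hm => ?_⟩
  obtain ⟨n, rfl⟩ : ∃ n, m = n + 1 := ⟨m - 1, by omega⟩
  simp [jacobiMoment, jacobiOp_pow_single_zero β γ (n + 1), excursion, Finset.sum_apply]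

end FirstReturn

def scaleAtZero (t : ℝ) (β : ℕ → ℝ) : ℕ → ℝ := fun n => if n = 0 then t * β 0 else β n

section ScaleAtZero

variable (t : ℝ) (β γ : ℕ → ℝ)

theorem jacobiOp_scaleAtZero_apply_zero (v : ℕ → ℝ) :
    jacobiOp (scaleAtZero t β) (scaleAtZero t γ) v 0 = t * jacobiOp β γ v 0 := by
  simp only [jacobiOp_apply, scaleAtZero, ↓reduceIte, zero_add]
  ring

theorem update_jacobiOp_scaleAtZero (v : ℕ → ℝ) :
    Function.update (jacobiOp (scaleAtZero t β) (scaleAtZero t γ) v) 0 0 =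
      Function.update (jacobiOp β γ v) 0 0 := by
  funext n
  rcases eq_or_ne n 0 with rfl | hn
  · simp
  · simp [hn, jacobiOp_apply, scaleAtZero]

theorem excursion_scaleAtZero : excursion (scaleAtZero t β) (scaleAtZero t γ) = excursion β γ := by
  funext m
  induction m with
  | zero => rfl
  | succ m ih => rw [excursion, ih, update_jacobiOp_scaleAtZero, excursion]

theorem firstReturn_scaleAtZero (k : ℕ) :
    firstReturn (scaleAtZero t β) (scaleAtZero t γ) k = t * firstReturn β γ k := by
  cases k with
  | zero => simp [firstReturn]
  | succ k => rw [firstReturn, excursion_scaleAtZero, jacobiOp_scaleAtZero_apply_zero, firstReturn]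

end ScaleAtZero

section Functionals

theorem FiniteMoments.integrable_eval {μ : Measure ℝ} (hμ : FiniteMoments μ) (p : ℝ[X]) :
    Integrable (fun x => p.eval x) μ := by
  simp_rw [eval_eq_sum_range]
  exact integrable_finsetSum _ fun i _ => (hμ i).const_mul _

def integralEval (μ : Measure ℝ) (hμ : FiniteMoments μ) : ℝ[X] →ₗ[ℝ] ℝ where
  toFun p := ∫ x, p.eval x ∂μ
  map_add' p q := by
    simp_rw [eval_add]
    exact integral_add (hμ.integrable_eval p) (hμ.integrable_eval q)
  map_smul' c p := by simp [integral_const_mul]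

theorem integralEval_apply {μ : Measure ℝ} (hμ : FiniteMoments μ) (p : ℝ[X]) :
    integralEval μ hμ p = ∫ x, p.eval x ∂μ :=
  rfl

theorem integralEval_X_pow {μ : Measure ℝ} (hμ : FiniteMoments μ) (m : ℕ) :
    integralEval μ hμ (X ^ m) = mom μ m := by
  simp [integralEval_apply, mom]

def jacobiFunctional (β γ : ℕ → ℝ) : ℝ[X] →ₗ[ℝ] ℝ :=
  LinearMap.proj 0 ∘ₗ LinearMap.applyₗ (Pi.single 0 1) ∘ₗ (aeval (jacobiOp β γ)).toLinearMap

theorem jacobiFunctional_apply (β γ : ℕ → ℝ) (p : ℝ[X]) :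
    jacobiFunctional β γ p = aeval (jacobiOp β γ) p (Pi.single 0 1) 0 :=
  rfl

theorem jacobiFunctional_X_pow (β γ : ℕ → ℝ) (m : ℕ) :
    jacobiFunctional β γ (X ^ m) = jacobiMoment β γ m := by
  simp [jacobiFunctional_apply, jacobiMoment]

theorem integralEval_eq_jacobiFunctional_of_mom_eq {μ : Measure ℝ} (hμ : FiniteMoments μ)
    {β γ : ℕ → ℝ} (h : mom μ = jacobiMoment β γ) :
    integralEval μ hμ = jacobiFunctional β γ := by
  refine lhom_ext' fun n => LinearMap.ext_ring ?_
  simp only [LinearMap.comp_apply, monomial_one_right_eq_X_pow, integralEval_X_pow,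
    jacobiFunctional_X_pow, h]

theorem HasJacobi.integralEval_eq {μ : Measure ℝ} [IsProbabilityMeasure μ]
    (hμ : FiniteMoments μ) {β γ : ℕ → ℝ} (hJ : HasJacobi μ β γ) :
    integralEval μ hμ = jacobiFunctional β γ := by
  obtain ⟨P, hmonic, hdeg, horth, hrec₀, hrec⟩ := hJ
  have hP₀ : P 0 = 1 := (hmonic 0).natDegree_eq_zero.mp (hdeg 0)
  let S : Sequence ℝ := ⟨P, fun n => by rw [degree_eq_natDegree (hmonic n).ne_zero, hdeg n]⟩
  refine LinearMap.ext_on_range (S.span fun n => ?_) fun n => ?_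
  · exact (hmonic n).leadingCoeff.symm ▸ isUnit_one
  · show integralEval μ hμ (P n) = jacobiFunctional β γ (P n)
    rw [jacobiFunctional_apply, aeval_jacobiOp_single_zero β γ P hP₀ hrec₀ hrec, integralEval_apply]
    rcases eq_or_ne n 0 with rfl | hn
    · simp [hP₀]
    · simpa [hP₀, hn] using horth n 0 hn

theorem HasJacobi.mom_eq {μ : Measure ℝ} [IsProbabilityMeasure μ]
    (hμ : FiniteMoments μ) {β γ : ℕ → ℝ} (hJ : HasJacobi μ β γ) :
    mom μ = jacobiMoment β γ := by
  funext m
  rw [← integralEval_X_pow hμ, hJ.integralEval_eq hμ, jacobiFunctional_X_pow]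

end Functionals

section JacobiPoly

variable (β γ : ℕ → ℝ)

def jacobiPoly : ℕ → ℝ[X]
  | 0 => 1
  | 1 => X - C (β 0)
  | n + 2 => (X - C (β (n + 1))) * jacobiPoly (n + 1) - C (γ n) * jacobiPoly n

theorem jacobiPoly_monic_and_natDegree :
    ∀ n, (jacobiPoly β γ n).Monic ∧ (jacobiPoly β γ n).natDegree = n
  | 0 => ⟨monic_one, natDegree_one⟩
  | 1 => ⟨monic_X_sub_C _, natDegree_X_sub_C _⟩
  | n + 2 => by
    obtain ⟨hmonic₁, hdeg₁⟩ := jacobiPoly_monic_and_natDegree (n + 1)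
    obtain ⟨-, hdeg₀⟩ := jacobiPoly_monic_and_natDegree n
    have hmonic : ((X - C (β (n + 1))) * jacobiPoly β γ (n + 1)).Monic :=
      (monic_X_sub_C _).mul hmonic₁
    have hdeg : ((X - C (β (n + 1))) * jacobiPoly β γ (n + 1)).natDegree = n + 2 := by
      rw [(monic_X_sub_C _).natDegree_mul hmonic₁, natDegree_X_sub_C, hdeg₁, add_comm]
    have hlow : (C (γ n) * jacobiPoly β γ n).natDegree < n + 2 :=
      (natDegree_C_mul_le _ _).trans_lt (by omega)
    exact ⟨hmonic.sub_of_left (degree_lt_degree (hdeg ▸ hlow)),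
      (natDegree_sub_eq_left_of_natDegree_lt (hdeg ▸ hlow)).trans hdeg⟩

theorem X_mul_jacobiPoly_zero :
    X * jacobiPoly β γ 0 = jacobiPoly β γ 1 + C (β 0) * jacobiPoly β γ 0 := by
  simp [jacobiPoly]

theorem X_mul_jacobiPoly_succ (n : ℕ) :
    X * jacobiPoly β γ (n + 1) = jacobiPoly β γ (n + 2) + C (β (n + 1)) * jacobiPoly β γ (n + 1) +
      C (γ n) * jacobiPoly β γ n := by
  rw [jacobiPoly]
  ring

theorem jacobiFunctional_jacobiPoly_mul_eq_zero {i j : ℕ} (hij : i < j) :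
    jacobiFunctional β γ (jacobiPoly β γ i * jacobiPoly β γ j) = 0 := by
  rw [jacobiFunctional_apply, map_mul, Module.End.mul_apply,
    aeval_jacobiOp_single_zero β γ _ rfl (X_mul_jacobiPoly_zero β γ) (X_mul_jacobiPoly_succ β γ)]
  exact aeval_jacobiOp_single_apply_zero β γ <| by
    rwa [(jacobiPoly_monic_and_natDegree β γ i).2]

end JacobiPoly

theorem hasJacobi_of_mom_eq {μ : Measure ℝ} (hμ : FiniteMoments μ) {β γ : ℕ → ℝ}
    (h : mom μ = jacobiMoment β γ) : HasJacobi μ β γ := by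
  have horth : ∀ i j, i < j →
      ∫ x, (jacobiPoly β γ i).eval x * (jacobiPoly β γ j).eval x ∂μ = 0 := by
    intro i j hij
    simp_rw [← eval_mul]
    rw [← integralEval_apply hμ, integralEval_eq_jacobiFunctional_of_mom_eq hμ h,
      jacobiFunctional_jacobiPoly_mul_eq_zero β γ hij]
  refine ⟨jacobiPoly β γ, fun n => (jacobiPoly_monic_and_natDegree β γ n).1,
    fun n => (jacobiPoly_monic_and_natDegree β γ n).2, fun i j hij => ?_,
    X_mul_jacobiPoly_zero β γ, X_mul_jacobiPoly_succ β γ⟩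
  rcases hij.lt_or_gt with hlt | hgt
  · exact horth i j hlt
  · simpa only [mul_comm] using horth j i hgt

section IntervalPartitions

theorem mem_IntPart {m : ℕ} {π : Finpartition (univ : Finset (Fin m))} :
    π ∈ IntPart m ↔ ∀ V ∈ π.parts, ∀ x ∈ V, ∀ y ∈ V, ∀ z, x ≤ z → z ≤ y → z ∈ V := by
  simp [IntPart]

theorem sum_IntPart_zero (c : ℕ → ℝ) : ∑ π ∈ IntPart 0, ∏ V ∈ π.parts, c V.card = 1 := by
  have hparts (π : Finpartition (univ : Finset (Fin 0))) : π.parts = ∅ :=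
    Finpartition.parts_eq_empty_iff.mpr (by simp)
  obtain ⟨π₀⟩ : Nonempty (Finpartition (univ : Finset (Fin 0))) := inferInstance
  have hsingleton : IntPart 0 = {π₀} := eq_singleton_iff_unique_mem.mpr
    ⟨by simp [mem_IntPart, hparts], fun π _ => Finpartition.ext (by rw [hparts, hparts])⟩
  simp [hsingleton, hparts]

def initialBlock (m k : ℕ) : Finset (Fin m) := univ.filter fun i => i.val < k

@[simp]
theorem mem_initialBlock {m k : ℕ} {i : Fin m} : i ∈ initialBlock m k ↔ i.val < k := by
  simp [initialBlock]

theorem part_zero_eq_initialBlock {m : ℕ} (hm : 0 < m) {π : Finpartition (univ : Finset (Fin m))}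
    (hπ : π ∈ IntPart m) : π.part ⟨0, hm⟩ = initialBlock m (π.part ⟨0, hm⟩).card := by
  set B := π.part ⟨0, hm⟩
  have hdown : ∀ x ∈ B, ∀ z ≤ x, z ∈ B := fun x hx z hzx =>
    mem_IntPart.mp hπ B (π.part_mem.mpr (mem_univ _)) _ (π.mem_part (mem_univ _)) x hx z
      (Fin.le_def.mpr (Nat.zero_le _)) hzx
  ext i
  rw [mem_initialBlock]
  constructor
  · intro hi
    have := card_le_card fun z hz => hdown i hi z (mem_Iic.mp hz)
    rw [Fin.card_Iic] at this
    omega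
  · intro hi
    by_contra hni
    have := card_le_card (t := Iio i) fun v hv =>
      mem_Iio.mpr (lt_of_not_ge fun h => hni (hdown v hv i h))
    rw [Fin.card_Iio] at this
    omega

variable {k n : ℕ}

def shiftedParts (k : ℕ) (σ : Finpartition (univ : Finset (Fin n))) :
    Finset (Finset (Fin (k + n))) :=
  σ.parts.map (mapEmbedding (Fin.natAddEmb k)).toEmbedding

theorem mem_shiftedParts {σ : Finpartition (univ : Finset (Fin n))} {W : Finset (Fin (k + n))} :
    W ∈ shiftedParts k σ ↔ ∃ V ∈ σ.parts, V.map (Fin.natAddEmb k) = W := by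
  simp [shiftedParts]

theorem natAdd_mem_map_natAddEmb {V : Finset (Fin n)} {j : Fin n} :
    Fin.natAdd k j ∈ V.map (Fin.natAddEmb k) ↔ j ∈ V :=
  mem_map' (Fin.natAddEmb k)

theorem castAdd_notMem_map_natAddEmb (V : Finset (Fin n)) (i : Fin k) :
    Fin.castAdd n i ∉ V.map (Fin.natAddEmb k) := by
  simp only [mem_map, Fin.natAddEmb_apply, not_exists, not_and]
  intro j _ h
  have := congrArg Fin.val h
  simp only [Fin.val_natAdd, Fin.val_castAdd] at this
  omega

theorem existsUnique_mem_insert_initialBlock (σ : Finpartition (univ : Finset (Fin n)))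
    (a : Fin (k + n)) : ∃! t, t ∈ insert (initialBlock (k + n) k) (shiftedParts k σ) ∧ a ∈ t := by
  induction a using Fin.addCases with
  | left i =>
    refine ⟨initialBlock (k + n) k, ⟨mem_insert_self _ _, by simp⟩, ?_⟩
    rintro t ⟨ht, hit⟩
    obtain rfl | ht := mem_insert.mp ht
    · rfl
    · obtain ⟨V, -, rfl⟩ := mem_shiftedParts.mp ht
      exact absurd hit (castAdd_notMem_map_natAddEmb V i)
  | right j =>
    refine ⟨(σ.part j).map (Fin.natAddEmb k),
      ⟨mem_insert_of_mem (mem_shiftedParts.mpr ⟨_, σ.part_mem.mpr (mem_univ j), rfl⟩),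
        natAdd_mem_map_natAddEmb.mpr (σ.mem_part (mem_univ j))⟩, ?_⟩
    rintro t ⟨ht, hjt⟩
    obtain rfl | ht := mem_insert.mp ht
    · simp at hjt
    · obtain ⟨V, hV, rfl⟩ := mem_shiftedParts.mp ht
      rw [σ.part_eq_of_mem hV (natAdd_mem_map_natAddEmb.mp hjt)]

theorem initialBlock_notMem_shiftedParts (hk : 0 < k) (σ : Finpartition (univ : Finset (Fin n))) :
    initialBlock (k + n) k ∉ shiftedParts k σ := by
  rw [mem_shiftedParts]
  rintro ⟨V, -, hV⟩
  have : Fin.castAdd n (⟨0, hk⟩ : Fin k) ∈ initialBlock (k + n) k := by simpa using hk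
  exact castAdd_notMem_map_natAddEmb V _ (hV ▸ this)

def prependBlock (hk : 0 < k) (σ : Finpartition (univ : Finset (Fin n))) :
    Finpartition (univ : Finset (Fin (k + n))) :=
  Finpartition.ofExistsUnique (insert (initialBlock (k + n) k) (shiftedParts k σ))
    (fun _ _ => subset_univ _) (fun a _ => existsUnique_mem_insert_initialBlock σ a) <| by
      rw [mem_insert, not_or]
      refine ⟨fun h => ?_, fun h => ?_⟩
      · have : Fin.castAdd n (⟨0, hk⟩ : Fin k) ∈ initialBlock (k + n) k := by simpa using hk
        simp [← h] at this
      · obtain ⟨V, hV, hVe⟩ := mem_shiftedParts.mp h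
        exact σ.empty_notMem_parts (map_eq_empty.mp hVe ▸ hV)

variable {hk : 0 < k} {σ : Finpartition (univ : Finset (Fin n))}

theorem prependBlock_parts :
    (prependBlock hk σ).parts = insert (initialBlock (k + n) k) (shiftedParts k σ) :=
  rfl

theorem prod_prependBlock (c : ℕ → ℝ) :
    ∏ V ∈ (prependBlock hk σ).parts, c V.card = c k * ∏ V ∈ σ.parts, c V.card := by
  rw [prependBlock_parts, prod_insert (initialBlock_notMem_shiftedParts hk σ), shiftedParts,
    prod_map]
  simp [initialBlock, Fin.card_filter_val_lt]

theorem part_zero_prependBlock :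
    (prependBlock hk σ).part ⟨0, by omega⟩ = initialBlock (k + n) k :=
  Finpartition.part_eq_of_mem _ (mem_insert_self _ _) (by simpa using hk)

theorem prependBlock_mem_IntPart (hσ : σ ∈ IntPart n) : prependBlock hk σ ∈ IntPart (k + n) := by
  rw [mem_IntPart, prependBlock_parts]
  intro W hW x hx y hy z hxz hzy
  obtain rfl | hW := mem_insert.mp hW
  · simp only [mem_initialBlock] at hy ⊢
    exact lt_of_le_of_lt hzy hy
  · obtain ⟨V, hV, rfl⟩ := mem_shiftedParts.mp hW
    obtain ⟨x', hx', rfl⟩ := mem_map.mp hx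
    obtain ⟨y', hy', rfl⟩ := mem_map.mp hy
    induction z using Fin.addCases with
    | left i =>
      simp only [Fin.natAddEmb_apply, Fin.le_def, Fin.val_natAdd, Fin.val_castAdd] at hxz
      omega
    | right j =>
      simp only [Fin.natAddEmb_apply, Fin.natAdd_le_natAdd_iff] at hxz hzy
      exact natAdd_mem_map_natAddEmb.mpr (mem_IntPart.mp hσ V hV x' hx' y' hy' j hxz hzy)

theorem prependBlock_injective (hk : 0 < k) :
    Function.Injective (prependBlock hk : Finpartition (univ : Finset (Fin n)) → _) := by
  intro σ τ h
  have hparts := congrArg (fun π => π.parts.erase (initialBlock (k + n) k)) h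
  simp only [prependBlock_parts, erase_insert (initialBlock_notMem_shiftedParts hk _)] at hparts
  exact Finpartition.ext (map_injective _ hparts)

section DropInitialBlock

def shiftDown (k : ℕ) (V : Finset (Fin (k + n))) : Finset (Fin n) :=
  V.preimage (Fin.natAddEmb k) (Fin.natAddEmb k).injective.injOn

@[simp]
theorem mem_shiftDown {V : Finset (Fin (k + n))} {j : Fin n} :
    j ∈ shiftDown k V ↔ Fin.natAdd k j ∈ V := by
  simp [shiftDown]

variable {π : Finpartition (univ : Finset (Fin (k + n)))}

theorem castAdd_notMem_of_ne_initialBlock (hB : initialBlock (k + n) k ∈ π.parts)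
    {V : Finset (Fin (k + n))} (hV : V ∈ π.parts) (hne : V ≠ initialBlock (k + n) k) (i : Fin k) :
    Fin.castAdd n i ∉ V := fun hi =>
  hne (π.eq_of_mem_parts hV hB hi (by simp))

theorem map_shiftDown (hB : initialBlock (k + n) k ∈ π.parts) {V : Finset (Fin (k + n))}
    (hV : V ∈ π.parts) (hne : V ≠ initialBlock (k + n) k) :
    (shiftDown k V).map (Fin.natAddEmb k) = V := by
  ext a
  induction a using Fin.addCases with
  | left i =>
    simp only [castAdd_notMem_map_natAddEmb, castAdd_notMem_of_ne_initialBlock hB hV hne]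
  | right j => simp

theorem existsUnique_mem_image_shiftDown (j : Fin n) :
    ∃! t, t ∈ (π.parts.erase (initialBlock (k + n) k)).image (shiftDown k) ∧ j ∈ t := by
  have hpart : π.part (Fin.natAdd k j) ∈ π.parts.erase (initialBlock (k + n) k) := by
    refine mem_erase.mpr ⟨fun h => ?_, π.part_mem.mpr (mem_univ _)⟩
    simpa [h] using π.mem_part (mem_univ (Fin.natAdd k j))
  refine ⟨_, ⟨mem_image_of_mem _ hpart, by simp [π.mem_part]⟩, ?_⟩
  rintro t ⟨ht, hjt⟩
  obtain ⟨V, hV, rfl⟩ := mem_image.mp ht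
  rw [π.part_eq_of_mem (mem_of_mem_erase hV) (mem_shiftDown.mp hjt)]

def dropInitialBlock (hB : initialBlock (k + n) k ∈ π.parts) :
    Finpartition (univ : Finset (Fin n)) :=
  Finpartition.ofExistsUnique ((π.parts.erase (initialBlock (k + n) k)).image (shiftDown k))
    (fun _ _ => subset_univ _) (fun j _ => existsUnique_mem_image_shiftDown j) <| by
      rw [mem_image]
      rintro ⟨V, hV, hVe⟩
      obtain ⟨hne, hV⟩ := mem_erase.mp hV
      have := map_shiftDown hB hV hne
      rw [hVe, map_empty] at this
      exact π.empty_notMem_parts (this ▸ hV)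

theorem prependBlock_dropInitialBlock (hB : initialBlock (k + n) k ∈ π.parts) (hk : 0 < k) :
    prependBlock hk (dropInitialBlock hB) = π := by
  refine Finpartition.ext ?_
  have hshift : shiftedParts k (dropInitialBlock hB) = π.parts.erase (initialBlock (k + n) k) := by
    rw [shiftedParts, map_eq_image]
    refine (image_image.trans (image_congr fun V hV => ?_)).trans image_id
    obtain ⟨hne, hV⟩ := mem_erase.mp hV
    exact map_shiftDown hB hV hne
  rw [prependBlock_parts, hshift, insert_erase hB]

theorem dropInitialBlock_mem_IntPart (hB : initialBlock (k + n) k ∈ π.parts)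
    (hπ : π ∈ IntPart (k + n)) : dropInitialBlock hB ∈ IntPart n := by
  rw [mem_IntPart]
  intro W hW x hx y hy z hxz hzy
  obtain ⟨V, hV, rfl⟩ := mem_image.mp hW
  rw [mem_shiftDown] at hx hy ⊢
  exact mem_IntPart.mp hπ V (mem_of_mem_erase hV) _ hx _ hy _
    ((Fin.natAdd_le_natAdd_iff k).mpr hxz) ((Fin.natAdd_le_natAdd_iff k).mpr hzy)

end DropInitialBlock

theorem sum_IntPart_filter_card_part_zero (c : ℕ → ℝ) {m : ℕ} (hm : 0 < m) (hk : 0 < k)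
    (hkn : k + n = m) :
    ∑ π ∈ (IntPart m).filter (fun π => (π.part ⟨0, hm⟩).card = k), ∏ V ∈ π.parts, c V.card =
      c k * ∑ σ ∈ IntPart n, ∏ V ∈ σ.parts, c V.card := by
  subst hkn
  rw [mul_sum]
  refine (sum_bij (fun σ _ => prependBlock hk σ) (fun σ hσ => ?_)
    (fun σ _ τ _ h => prependBlock_injective hk h) (fun π hπ => ?_)
    (fun σ _ => (prod_prependBlock c).symm)).symm
  · rw [mem_filter, part_zero_prependBlock]
    exact ⟨prependBlock_mem_IntPart hσ, by simp [initialBlock, Fin.card_filter_val_lt]⟩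
  · obtain ⟨hπ, hcard⟩ := mem_filter.mp hπ
    have hB := π.part_mem.mpr (mem_univ ⟨0, hm⟩)
    rw [part_zero_eq_initialBlock hm hπ, hcard] at hB
    exact ⟨_, dropInitialBlock_mem_IntPart hB hπ, prependBlock_dropInitialBlock hB hk⟩

theorem isRenewal_sum_IntPart (c : ℕ → ℝ) :
    IsRenewal c (fun m => ∑ π ∈ IntPart m, ∏ V ∈ π.parts, c V.card) := by
  refine ⟨sum_IntPart_zero c, fun m hm => ?_⟩
  have hmaps : ∀ π ∈ IntPart m, (π.part ⟨0, hm⟩).card ∈ Icc 1 m := fun π _ =>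
    mem_Icc.mpr ⟨card_pos.mpr (π.part_nonempty.mpr (mem_univ _)),
      (card_le_univ _).trans_eq (Fintype.card_fin m)⟩
  dsimp only
  rw [← sum_fiberwise_of_maps_to hmaps]
  refine sum_congr rfl fun k hk => ?_
  obtain ⟨hk1, hkm⟩ := mem_Icc.mp hk
  exact sum_IntPart_filter_card_part_zero c hm hk1 (Nat.add_sub_cancel' hkm)

theorem BooleanCumulants.isRenewal {μ : Measure ℝ} [IsProbabilityMeasure μ] {η : ℕ → ℝ}
    (h : BooleanCumulants μ η) : IsRenewal η (mom μ) := by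
  convert isRenewal_sum_IntPart η using 1
  funext m
  rcases Nat.eq_zero_or_pos m with rfl | hm
  · simp [mom, sum_IntPart_zero]
  · exact h m hm

end IntervalPartitions

theorem stmt_8_general (μ ν : Measure ℝ) [IsProbabilityMeasure μ] [IsProbabilityMeasure ν]
    (hfinμ : FiniteMoments μ) (hfinν : FiniteMoments ν)
    (β γ : ℕ → ℝ) (hJ : HasJacobi μ β γ)
    (η : ℕ → ℝ) (hη : BooleanCumulants μ η)
    (t : ℝ)
    (hν : BooleanCumulants ν (fun n => t * η n)) :
    HasJacobi ν (fun n => if n = 0 then t * β 0 else β n)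
      (fun n => if n = 0 then t * γ 0 else γ n) := by
  have hμ_mom : mom μ = jacobiMoment β γ := hJ.mom_eq hfinμ
  have hη_eq : ∀ k, 1 ≤ k → η k = firstReturn β γ k :=
    hη.isRenewal.weights_eq (hμ_mom ▸ isRenewal_jacobiMoment β γ)
  have hν_mom : mom ν = jacobiMoment (scaleAtZero t β) (scaleAtZero t γ) :=
    hν.isRenewal.eq_of_weights_eq (isRenewal_jacobiMoment _ _) fun k hk => by
      rw [firstReturn_scaleAtZero, hη_eq k hk]
  exact hasJacobi_of_mom_eq hfinν hν_mom

/-- Boolean convolution powers rescale only the level-0 Jacobi parameters. -/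
theorem stmt_8 (μ ν : Measure ℝ) [IsProbabilityMeasure μ] [IsProbabilityMeasure ν]
    (hfinμ : FiniteMoments μ) (hfinν : FiniteMoments ν)
    (β γ : ℕ → ℝ) (hJ : HasJacobi μ β γ)
    (η : ℕ → ℝ) (hη : BooleanCumulants μ η)
    (t : ℝ) (ht : 0 < t)
    (hν : BooleanCumulants ν (fun n => t * η n)) :
    HasJacobi ν (fun n => if n = 0 then t * β 0 else β n)
      (fun n => if n = 0 then t * γ 0 else γ n) :=
  stmt_8_general μ ν hfinμ hfinν β γ hJ η hη t hν

end
end
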